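/- arXiv:1302.5443 — 2 statements merged into one kernel-verified Lean document; each statement's English description precedes it below -/
import Mathlib

section
/- Lipschitz property for the SI process (Lemma 4A): let h > 0 and let A be a random edge-timer vector whose components (A(e))_{e∈E(G)} are independent exponential rate-1 random variables. Define f(x,a) = (g(x,a) − x)/h, a vector in ℝ^V. Then for all states x and z, E[‖f(x,A) − f(z,A)‖₁] ≤ k·‖x − z‖₁. -/
/-!
Let `Δ_j` be the difference at node `j` of the two increments `g(x,a) - x` and `g(z,a) - z`.
It is nonzero only if `j` is newly infected in one state and not in the other, which needs a
firing edge `jj'` with either `x_j = z_j = 0` and `x_{j'} ≠ z_{j'}`, or `x_j ≠ z_j` and `j'`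
infected in the state where `j` is susceptible. Charging `|Δ_j|` to such an edge, and then
moving charges of the first kind from `j` to `j'`, every node `j` receives at most one unit per
firing incident edge, and only when `x_j ≠ z_j`: the two kinds of charge arriving at `j` come
from disjoint sets of neighbours. An edge fires with probability `1 - e^{-h} ≤ h`, so the
expected total is at most `h · deg j` per node `j` with `x_j ≠ z_j`.
-/

open MeasureTheory ProbabilityTheory Real

/-- View a Boolean infection state as a real number (`true ↦ 1`, `false ↦ 0`). -/
def boolToR (b : Bool) : ℝ := if b then 1 else 0

open Classical in
/-- One step of the SI discrete-time simulation (DTS): node `j` is infected afterwards iff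
it was infected, or some infected neighbor's edge timer fires within time `h`. -/
noncomputable def siDTS {V : Type*} (G : SimpleGraph V) (h : ℝ) (x : V → Bool)
    (a : G.edgeSet → ℝ) : V → Bool := fun j =>
  if x j = true ∨ ∃ j', ∃ hadj : G.Adj j j',
      x j' = true ∧ a ⟨s(j, j'), (SimpleGraph.mem_edgeSet G).mpr hadj⟩ ≤ h
  then true else false

/-- `f(x,a) = (g(x,a) - x)/h`, the incremental rate of change of the SI DTS, as a vector
in `ℝ^V`. -/
noncomputable def siF {V : Type*} (G : SimpleGraph V) (h : ℝ) (x : V → Bool)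
    (a : G.edgeSet → ℝ) : V → ℝ := fun j =>
  (boolToR (siDTS G h x a j) - boolToR (x j)) / h

open Finset

def edgeFires {V : Type*} (G : SimpleGraph V) (h : ℝ) (a : G.edgeSet → ℝ) (j j' : V) : Prop :=
  ∃ hadj : G.Adj j j', a ⟨s(j, j'), G.mem_edgeSet.mpr hadj⟩ ≤ h

section Deterministic

variable {V : Type*} {G : SimpleGraph V} {h : ℝ} {a : G.edgeSet → ℝ}

theorem siDTS_eq_true_iff {x : V → Bool} {j : V} :
    siDTS G h x a j = true ↔ x j = true ∨ ∃ j', edgeFires G h a j j' ∧ x j' = true := by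
  unfold siDTS edgeFires
  split_ifs <;> grind

open Classical in
theorem boolToR_siDTS_sub (x : V → Bool) (j : V) :
    boolToR (siDTS G h x a j) - boolToR (x j) =
      if x j = false ∧ ∃ j', edgeFires G h a j j' ∧ x j' = true then 1 else 0 := by
  have hx := siDTS_eq_true_iff (G := G) (h := h) (a := a) (x := x) (j := j)
  cases hxj : x j <;> cases hg : siDTS G h x a j <;> simp_all [boolToR]

def susceptibleWeight (x z : V → Bool) (j j' : V) : ℝ :=
  if x j = false ∧ z j = false ∧ x j' ≠ z j' then 1 else 0

def discordantWeight (x z : V → Bool) (j j' : V) : ℝ :=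
  if (x j = true ∧ z j = false ∧ z j' = true) ∨ (x j = false ∧ z j = true ∧ x j' = true)
  then 1 else 0

theorem susceptibleWeight_add_discordantWeight_le (x z : V → Bool) (j j' : V) :
    susceptibleWeight x z j' j + discordantWeight x z j j' ≤ |boolToR (x j) - boolToR (z j)| := by
  unfold susceptibleWeight discordantWeight boolToR
  cases x j <;> cases z j <;> cases x j' <;> cases z j' <;> norm_num

theorem susceptibleWeight_add_discordantWeight_comm (x z : V → Bool) (j j' : V) :
    susceptibleWeight z x j j' + discordantWeight z x j j' =
      susceptibleWeight x z j j' + discordantWeight x z j j' := by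
  unfold susceptibleWeight discordantWeight
  cases x j <;> cases z j <;> cases x j' <;> cases z j' <;> norm_num

theorem one_le_susceptibleWeight_add_discordantWeight {x z : V → Bool} {j j' : V}
    (hxj : x j = false) (hxj' : x j' = true) (hz : z j = false → z j' = false) :
    1 ≤ susceptibleWeight x z j j' + discordantWeight x z j j' := by
  unfold susceptibleWeight discordantWeight
  cases hzj : z j
  · simp [hxj, hxj', hz hzj]
  · simp [hxj, hxj']

open Classical in
theorem abs_boolToR_siDTS_sub_sub_le [Fintype V] (x z : V → Bool) (j : V) :
    |(boolToR (siDTS G h x a j) - boolToR (x j)) - (boolToR (siDTS G h z a j) - boolToR (z j))| ≤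
      ∑ j', if edgeFires G h a j j' then
        susceptibleWeight x z j j' + discordantWeight x z j j' else 0 := by
  set S := ∑ j', if edgeFires G h a j j' then
    susceptibleWeight x z j j' + discordantWeight x z j j' else 0
  have hterm_nonneg (j' : V) : 0 ≤ if edgeFires G h a j j' then
      susceptibleWeight x z j j' + discordantWeight x z j j' else 0 := by
    unfold susceptibleWeight discordantWeight; split_ifs <;> norm_num
  have hS : 0 ≤ S := sum_nonneg fun j' _ => hterm_nonneg j'
  have one_le_S {j' : V} (hf : edgeFires G h a j j')
      (hw : 1 ≤ susceptibleWeight x z j j' + discordantWeight x z j j') : 1 ≤ S := by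
    refine le_trans ?_ (single_le_sum (fun j' _ => hterm_nonneg j') (mem_univ j'))
    rwa [if_pos hf]
  rw [boolToR_siDTS_sub, boolToR_siDTS_sub]
  split_ifs with hx hz hz
  · simpa using hS
  · obtain ⟨hxj, j', hf, hxj'⟩ := hx
    push Not at hz
    have := one_le_S hf (one_le_susceptibleWeight_add_discordantWeight hxj hxj'
      fun hzj => by simpa using hz hzj j' hf)
    norm_num; linarith
  · obtain ⟨hzj, j', hf, hzj'⟩ := hz
    push Not at hx
    have := one_le_S hf (susceptibleWeight_add_discordantWeight_comm x z j j' ▸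
      one_le_susceptibleWeight_add_discordantWeight hzj hzj' fun hxj => by simpa using hx hxj j' hf)
    norm_num; linarith
  · simpa using hS

open Classical in
theorem abs_siF_sub_le [Fintype V] (h0 : 0 < h) (x z : V → Bool) (j : V) :
    |siF G h x a j - siF G h z a j| ≤
      (∑ j', if edgeFires G h a j j' then
        susceptibleWeight x z j j' + discordantWeight x z j j' else 0) / h := by
  rw [siF, siF, div_sub_div_same, abs_div, abs_of_pos h0]
  exact div_le_div_of_nonneg_right (abs_boolToR_siDTS_sub_sub_le x z j) h0.le

end Deterministic

theorem sum_sum_neighborFinset_le {V : Type*} [Fintype V] (G : SimpleGraph V)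
    [DecidableRel G.Adj] {k : ℕ} (hdeg : ∀ j, G.degree j ≤ k) (t₁ t₂ : V → V → ℝ)
    {d : V → ℝ} (hd : ∀ j, 0 ≤ d j) (ht : ∀ j j', t₁ j' j + t₂ j j' ≤ d j) :
    ∑ j, ∑ j' ∈ G.neighborFinset j, (t₁ j j' + t₂ j j') ≤ k * ∑ j, d j := by
  have hswap :
      ∑ j, ∑ j' ∈ G.neighborFinset j, t₁ j j' = ∑ j, ∑ j' ∈ G.neighborFinset j, t₁ j' j :=
    sum_comm' fun j j' => by simp [G.adj_comm]
  calc ∑ j, ∑ j' ∈ G.neighborFinset j, (t₁ j j' + t₂ j j')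
      = ∑ j, ∑ j' ∈ G.neighborFinset j, (t₁ j' j + t₂ j j') := by
        simp only [sum_add_distrib, hswap]
    _ ≤ ∑ j, ∑ j' ∈ G.neighborFinset j, d j := by gcongr with j _ j' _; exact ht j j'
    _ ≤ ∑ j, k * d j := by
        gcongr with j
        rw [sum_const, G.card_neighborFinset_eq_degree, nsmul_eq_mul]
        exact mul_le_mul_of_nonneg_right (by exact_mod_cast hdeg j) (hd j)
    _ = k * ∑ j, d j := (mul_sum ..).symm

theorem expMeasure_real_Iic_le {r : ℝ} (hr : 0 < r) {x : ℝ} (hx : 0 ≤ x) :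
    (expMeasure r).real (Set.Iic x) ≤ r * x := by
  have := isProbabilityMeasure_expMeasure hr
  rw [← cdf_eq_real, cdf_expMeasure_eq hr, if_pos hx]
  linarith [add_one_le_exp (-(r * x))]

section Random

variable {Ω V : Type*} [MeasurableSpace Ω] {μ : Measure Ω} {G : SimpleGraph V}
  {A : Ω → G.edgeSet → ℝ}

theorem measurableSet_edgeFires (hA : ∀ e, Measurable fun ω => A ω e) (h : ℝ) (j j' : V) :
    MeasurableSet {ω | edgeFires G h (A ω) j j'} := by
  by_cases hadj : G.Adj j j'
  · simp only [edgeFires, hadj, exists_true_left]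
    exact hA _ measurableSet_Iic
  · simp [edgeFires, hadj]

theorem measureReal_edgeFires [DecidableRel G.Adj] (hA : ∀ e, Measurable fun ω => A ω e)
    {ν : Measure ℝ} (hdist : ∀ e, μ.map (fun ω => A ω e) = ν) (h : ℝ) (j j' : V) :
    μ.real {ω | edgeFires G h (A ω) j j'} = if G.Adj j j' then ν.real (Set.Iic h) else 0 := by
  by_cases hadj : G.Adj j j'
  · simp only [edgeFires, hadj, exists_true_left, if_pos]
    rw [← hdist, map_measureReal_apply (hA _) measurableSet_Iic]
    rfl
  · simp [edgeFires, hadj]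

open Classical in
theorem integrable_ite_edgeFires [IsFiniteMeasure μ] (hA : ∀ e, Measurable fun ω => A ω e)
    (h c : ℝ) (j j' : V) : Integrable (fun ω => if edgeFires G h (A ω) j j' then c else 0) μ :=
  (integrable_const c).indicator (measurableSet_edgeFires hA h j j')

open Classical in
theorem integral_ite_edgeFires (hA : ∀ e, Measurable fun ω => A ω e) {ν : Measure ℝ}
    (hdist : ∀ e, μ.map (fun ω => A ω e) = ν) (h c : ℝ) (j j' : V) :
    ∫ ω, (if edgeFires G h (A ω) j j' then c else 0) ∂μ =
      if G.Adj j j' then ν.real (Set.Iic h) * c else 0 := by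
  rw [← ite_zero_mul, ← measureReal_edgeFires hA hdist, ← smul_eq_mul,
    ← integral_indicator_const c (measurableSet_edgeFires hA h j j')]
  rfl

open Classical in
theorem integral_sum_sum_ite_edgeFires [IsFiniteMeasure μ] [Fintype V]
    (hA : ∀ e, Measurable fun ω => A ω e) {ν : Measure ℝ}
    (hdist : ∀ e, μ.map (fun ω => A ω e) = ν) (h : ℝ) (w : V → V → ℝ) :
    ∫ ω, (∑ j, ∑ j', if edgeFires G h (A ω) j j' then w j j' else 0) ∂μ =
      ν.real (Set.Iic h) * ∑ j, ∑ j' ∈ G.neighborFinset j, w j j' := by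
  rw [integral_finsetSum _ fun j _ => integrable_finsetSum _ fun j' _ =>
    integrable_ite_edgeFires hA h _ j j', mul_sum]
  refine sum_congr rfl fun j _ => ?_
  rw [integral_finsetSum _ fun j' _ => integrable_ite_edgeFires hA h _ j j',
    G.neighborFinset_eq_filter, sum_filter, mul_sum]
  refine sum_congr rfl fun j' _ => ?_
  rw [integral_ite_edgeFires hA hdist, mul_ite, mul_zero]

end Random

theorem si_lipschitz_general {Ω : Type*} [MeasureSpace Ω]
    [IsProbabilityMeasure (ℙ : Measure Ω)]
    {V : Type*} [Fintype V] (G : SimpleGraph V) (k : ℕ)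
    (hdeg : ∀ j : V, (G.neighborSet j).ncard ≤ k)
    (h : ℝ) (h0 : 0 < h)
    (A : Ω → G.edgeSet → ℝ)
    (hAmeas : ∀ e : G.edgeSet, Measurable fun ω => A ω e)
    (hAdist : ∀ e : G.edgeSet, Measure.map (fun ω => A ω e) ℙ = expMeasure 1)
    (x z : V → Bool) :
    ∫ ω, ∑ j : V, |siF G h x (A ω) j - siF G h z (A ω) j| ∂ℙ ≤
      (k : ℝ) * ∑ j : V, |boolToR (x j) - boolToR (z j)| := by
  classical
  have hdegree (j : V) : G.degree j ≤ k := by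
    rw [← G.card_neighborSet_eq_degree, ← Nat.card_eq_fintype_card, Nat.card_coe_set_eq]
    exact hdeg j
  set w : V → V → ℝ := fun j j' => susceptibleWeight x z j j' + discordantWeight x z j j'
  set bound : Ω → ℝ := fun ω => ∑ j, ∑ j', if edgeFires G h (A ω) j j' then w j j' else 0
  have hbound : Integrable bound ℙ := integrable_finsetSum _ fun j _ =>
    integrable_finsetSum _ fun j' _ => integrable_ite_edgeFires hAmeas h _ j j'
  calc ∫ ω, ∑ j, |siF G h x (A ω) j - siF G h z (A ω) j| ∂ℙ
      ≤ ∫ ω, bound ω / h ∂ℙ :=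
        integral_mono_of_nonneg (.of_forall fun ω => by positivity) (hbound.div_const h)
          (.of_forall fun ω => (sum_le_sum fun j _ => abs_siF_sub_le (a := A ω) h0 x z j).trans_eq
            (sum_div ..).symm)
    _ = (expMeasure 1).real (Set.Iic h) / h * ∑ j, ∑ j' ∈ G.neighborFinset j, w j j' := by
        rw [integral_div, integral_sum_sum_ite_edgeFires hAmeas hAdist]
        ring
    _ ≤ (expMeasure 1).real (Set.Iic h) / h * (k * ∑ j, |boolToR (x j) - boolToR (z j)|) := by
        gcongr
        exact sum_sum_neighborFinset_le G hdegree _ _ (fun j => abs_nonneg _)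
          (susceptibleWeight_add_discordantWeight_le x z)
    _ ≤ 1 * (k * ∑ j, |boolToR (x j) - boolToR (z j)|) := by
        gcongr
        rw [div_le_one h0]
        simpa using expMeasure_real_Iic_le one_pos h0.le
    _ = k * ∑ j, |boolToR (x j) - boolToR (z j)| := one_mul _

/-- **Lemma 4A (Lipschitz property for the SI process).** If the edge timers `A(e)`,
`e ∈ E(G)`, are independent exponential rate-1 random variables and `f(x,a) = (g(x,a)-x)/h`,
then for all states `x` and `z`, `E[‖f(x,A) - f(z,A)‖₁] ≤ k * ‖x - z‖₁`. -/
theorem si_lipschitz {Ω : Type*} [MeasureSpace Ω]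
    [IsProbabilityMeasure (ℙ : Measure Ω)]
    {V : Type*} [Fintype V] (G : SimpleGraph V) (k : ℕ)
    (hdeg : ∀ j : V, (G.neighborSet j).ncard ≤ k)
    (h : ℝ) (h0 : 0 < h)
    (A : Ω → G.edgeSet → ℝ)
    (hAmeas : ∀ e : G.edgeSet, Measurable fun ω => A ω e)
    (hAindep : iIndepFun (fun (e : G.edgeSet) ω => A ω e) ℙ)
    (hAdist : ∀ e : G.edgeSet, Measure.map (fun ω => A ω e) ℙ = expMeasure 1)
    (x z : V → Bool) :
    ∫ ω, ∑ j : V, |siF G h x (A ω) j - siF G h z (A ω) j| ∂ℙ ≤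
      (k : ℝ) * ∑ j : V, |boolToR (x j) - boolToR (z j)| :=
  si_lipschitz_general G k hdeg h h0 A hAmeas hAdist x z
end

section
/- Expected one-step infection count for the SI DTS map: let h > 0 and let A be a random edge-timer vector whose components (A(e))_{e∈E(G)} are independent exponential rate-1 random variables. Then for every state x, E[‖g(x,A) − x‖₁] = ∑_{j∈V} (1 − exp(−h·n(j,x))). -/
/-!
A node that is already infected contributes nothing, and a susceptible node `j` contributes the
indicator that one of the `n(j,x)` timers on its edges to infected neighbours is at most `h`.
These timers are independent `Exp(1)` variables, so all of them exceed `h` with probability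
`exp (-h) ^ n(j,x)`; linearity of expectation sums the complementary probabilities over `j`.
-/

open MeasureTheory ProbabilityTheory Real

/-- `n(j,x)`: the number of infected neighbors of `j` if `j` is susceptible, and `0` else. -/
noncomputable def numInfNbrs {V : Type*} (G : SimpleGraph V) (x : V → Bool) (j : V) : ℕ :=
  if x j then 0 else {j' | G.Adj j j' ∧ x j' = true}.ncard

lemma expMeasure_real_Ioi {r t : ℝ} (hr : 0 < r) (ht : 0 ≤ t) :
    (expMeasure r).real (Set.Ioi t) = exp (-(r * t)) := by
  have := isProbabilityMeasure_expMeasure hr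
  rw [← Set.compl_Iic, probReal_compl_eq_one_sub measurableSet_Iic, ← cdf_eq_real,
    cdf_expMeasure_eq hr, if_pos ht, sub_sub_cancel]

section Independence

variable {Ω ι : Type*} [MeasurableSpace Ω] {μ : Measure Ω} {X : ι → Ω → ℝ} {S : Set ι}

lemma measurableSet_exists_mem_le (hX : ∀ i, Measurable (X i)) (hS : S.Finite) (t : ℝ) :
    MeasurableSet {ω | ∃ i ∈ S, X i ω ≤ t} := by
  have : {ω | ∃ i ∈ S, X i ω ≤ t} = ⋃ i ∈ S, {ω | X i ω ≤ t} := by ext; simp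
  exact this ▸ hS.measurableSet_biUnion fun i _ => measurableSet_le (hX i) measurable_const

lemma ProbabilityTheory.iIndepFun.measureReal_exists_mem_le [IsProbabilityMeasure μ]
    (hX : ∀ i, Measurable (X i)) (hind : iIndepFun X μ) {r : ℝ} (hr : 0 < r)
    (hdist : ∀ i, μ.map (X i) = expMeasure r)
    (hS : S.Finite) {t : ℝ} (ht : 0 ≤ t) :
    μ.real {ω | ∃ i ∈ S, X i ω ≤ t} = 1 - exp (-(r * t * S.ncard)) := by
  obtain ⟨S, rfl⟩ := hS.exists_finset_coe
  have hcompl : {ω | ∃ i ∈ (S : Set ι), X i ω ≤ t}ᶜ = ⋂ i ∈ S, X i ⁻¹' Set.Ioi t := by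
    ext ω; simp
  have hsurvive : ∀ i, μ.real (X i ⁻¹' Set.Ioi t) = exp (-(r * t)) := fun i => by
    rw [← map_measureReal_apply (hX i) measurableSet_Ioi, hdist i, expMeasure_real_Ioi hr ht]
  rw [← sub_sub_cancel 1 (μ.real _), ← probReal_compl_eq_one_sub
    (measurableSet_exists_mem_le hX S.finite_toSet t), hcompl, measureReal_def,
    hind.meas_biInter fun i _ => ⟨Set.Ioi t, measurableSet_Ioi, rfl⟩, ENNReal.toReal_prod]
  simp only [← measureReal_def, hsurvive, Finset.prod_const, Set.ncard_coe_finset,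
    ← Real.exp_nat_mul]
  ring_nf

end Independence

namespace SimpleGraph

variable {V : Type*} (G : SimpleGraph V)

def neighborEdge (j : V) (v : G.neighborSet j) : G.edgeSet := ⟨s(j, v), v.2⟩

lemma neighborEdge_injective (j : V) : Function.Injective (G.neighborEdge j) :=
  fun _ _ hvw => Subtype.ext (Sym2.congr_right.mp (congrArg Subtype.val hvw))

/-- The neighbors through which `j` can be infected; empty when `j` is already infected,
matching the convention `n(j,x) = 0` there. -/
def infectingNeighbors (x : V → Bool) (j : V) : Set (G.neighborSet j) :=
  {v | x j = false ∧ x v = true}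

lemma ncard_infectingNeighbors (x : V → Bool) (j : V) :
    (G.infectingNeighbors x j).ncard = numInfNbrs G x j := by
  unfold infectingNeighbors numInfNbrs
  cases hj : x j
  · rw [← Set.ncard_image_of_injective _ Subtype.val_injective]
    congr 1
    ext v
    simp [and_comm]
  · simp

lemma siDTS_eq_true_iff (h : ℝ) (x : V → Bool) (a : G.edgeSet → ℝ) (j : V) :
    siDTS G h x a j = true ↔
      x j = true ∨ ∃ v : G.neighborSet j, x v = true ∧ a (G.neighborEdge j v) ≤ h := by
  simp [siDTS, neighborEdge]

lemma abs_boolToR_siDTS_sub (h : ℝ) (x : V → Bool) (a : G.edgeSet → ℝ) (j : V) :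
    |boolToR (siDTS G h x a j) - boolToR (x j)| =
      {a : G.edgeSet → ℝ | ∃ v ∈ G.infectingNeighbors x j, a (G.neighborEdge j v) ≤ h}.indicator
        1 a := by
  set E := {a : G.edgeSet → ℝ | ∃ v ∈ G.infectingNeighbors x j, a (G.neighborEdge j v) ≤ h}
  cases hj : x j
  · have hiff : siDTS G h x a j = true ↔ a ∈ E := by
      simp [E, siDTS_eq_true_iff, infectingNeighbors, hj]
    by_cases ha : a ∈ E
    · rw [Set.indicator_of_mem ha, hiff.2 ha]
      norm_num [boolToR]
    · rw [Set.indicator_of_notMem ha, Bool.eq_false_iff.2 (mt hiff.1 ha)]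
      norm_num [boolToR]
  · have hE : E = ∅ := by simp [E, infectingNeighbors, hj]
    simp [hE, boolToR, (G.siDTS_eq_true_iff h x a j).2 (Or.inl hj)]

end SimpleGraph

/-- **Expected one-step infection count for the SI DTS map.** If `h > 0` and the edge
timers `A(e)`, `e ∈ E(G)`, are independent exponential rate-1 random variables, then for
every state `x`, `E[‖g(x,A) - x‖₁] = ∑_j (1 - exp (-h * n(j,x)))`. -/
theorem expected_one_step_infections {Ω : Type*} [MeasureSpace Ω]
    [IsProbabilityMeasure (ℙ : Measure Ω)]
    {V : Type*} [Fintype V] (G : SimpleGraph V)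
    (h : ℝ) (h0 : 0 < h)
    (A : Ω → G.edgeSet → ℝ)
    (hAmeas : ∀ e : G.edgeSet, Measurable fun ω => A ω e)
    (hAindep : iIndepFun (fun (e : G.edgeSet) ω => A ω e) ℙ)
    (hAdist : ∀ e : G.edgeSet, Measure.map (fun ω => A ω e) ℙ = expMeasure 1)
    (x : V → Bool) :
    ∫ ω, ∑ j : V, |boolToR (siDTS G h x (A ω) j) - boolToR (x j)| ∂ℙ =
      ∑ j : V, (1 - Real.exp (-(h * (numInfNbrs G x j : ℝ)))) := by
  set E : V → Set Ω := fun j =>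
    {ω | ∃ v ∈ G.infectingNeighbors x j, A ω (G.neighborEdge j v) ≤ h}
  have hE : ∀ j, MeasurableSet (E j) := fun j =>
    measurableSet_exists_mem_le (fun _ => hAmeas _) (Set.toFinite _) h
  have hintegrand : ∀ j, (fun ω => |boolToR (siDTS G h x (A ω) j) - boolToR (x j)|) =
      (E j).indicator 1 := fun j => funext fun ω => G.abs_boolToR_siDTS_sub h x (A ω) j
  rw [integral_finsetSum _ fun j _ => hintegrand j ▸ (integrable_const 1).indicator (hE j)]
  refine Finset.sum_congr rfl fun j _ => ?_
  rw [hintegrand j, integral_indicator_one (hE j),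
    (hAindep.precomp (G.neighborEdge_injective j)).measureReal_exists_mem_le (fun _ => hAmeas _)
      one_pos (fun _ => hAdist _) (Set.toFinite _) h0.le,
    G.ncard_infectingNeighbors, one_mul]
end
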